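/- arXiv:1008.1544 — 2 statements merged into one kernel-verified Lean document; each statement's English description precedes it below -/
import Mathlib

section
/- Let X ⊆ ℝ² bounded, Y = (0,1), c ∈ C² with ∇_x(∂c/∂y) nowhere vanishing, μ, ν absolutely continuous probability measures. Then for each y ∈ Y there exists x ∈ X̄ such that y splits the mass at every x̄ ∈ L_x(y), i.e. μ({x' : ∂c/∂y(x,y) < ∂c/∂y(x',y)}) = ν([0,y)). -/
/-!
At a fixed `y`, put `F := ∂c/∂y(·, y)` and push `μ` forward to `ρ := F_* μ` on `ℝ`. Since `∇F`
never vanishes on `X̄`, every level set of `F` meets `X̄` in a Lebesgue-null set (by Fubini, each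
point of it is isolated on a horizontal or on a vertical line), so `ρ` has no atoms and
`t ↦ ρ (t, ∞)` is continuous. It decreases from `1` at `min F(X̄)` to `0` at `max F(X̄)`, so it
takes the value `ν [0, y)` somewhere; as `ρ` lives on the compact set `F(X̄)`, that value is also
taken at a point `t = F x` with `x ∈ X̄`.
-/

open Set MeasureTheory Filter Topology ProbabilityTheory

section Calculus

variable {𝕜 E G : Type*} [NontriviallyNormedField 𝕜] [NormedAddCommGroup E] [NormedSpace 𝕜 E]
  [NormedAddCommGroup G] [NormedSpace 𝕜 G]

theorem differentiableAt_of_fderiv_apply_ne_zero {f : E → G} {x v : E}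
    (h : fderiv 𝕜 f x v ≠ 0) : DifferentiableAt 𝕜 f x := by
  by_contra hf
  simp [fderiv_zero_of_not_differentiableAt hf] at h

theorem DifferentiableAt.deriv_comp_mk_const {f : 𝕜 × E → G} {a : 𝕜} {b : E}
    (hf : DifferentiableAt 𝕜 f (a, b)) : deriv (fun a' => f (a', b)) a = fderiv 𝕜 f (a, b) (1, 0) :=
  (hf.hasFDerivAt.comp_hasDerivAt a ((hasDerivAt_id a).prodMk (hasDerivAt_const a b))).deriv

theorem DifferentiableAt.deriv_comp_const_mk {f : E × 𝕜 → G} {a : E} {b : 𝕜}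
    (hf : DifferentiableAt 𝕜 f (a, b)) : deriv (fun b' => f (a, b')) b = fderiv 𝕜 f (a, b) (0, 1) :=
  (hf.hasFDerivAt.comp_hasDerivAt b ((hasDerivAt_const b a).prodMk (hasDerivAt_id b))).deriv

theorem continuous_deriv_of_contDiff_uncurry {c : E → 𝕜 → G}
    (hc : ContDiff 𝕜 1 (Function.uncurry c)) (y : 𝕜) : Continuous fun x => deriv (c x) y := by
  have hdiff : Differentiable 𝕜 (Function.uncurry c) := hc.differentiable one_ne_zero
  have hderiv : (fun x => deriv (c x) y) = fun x => fderiv 𝕜 (Function.uncurry c) (x, y) (0, 1) :=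
    funext fun x => (hdiff (x, y)).deriv_comp_const_mk
  rw [hderiv]
  exact ((hc.continuous_fderiv one_ne_zero).comp (continuous_id.prodMk continuous_const)).clm_apply
    continuous_const

theorem ContinuousLinearMap.eq_zero_of_apply_inl_inr {L : 𝕜 × 𝕜 →L[𝕜] G} (h₁ : L (1, 0) = 0)
    (h₂ : L (0, 1) = 0) : L = 0 :=
  prod_ext (ext_ring (by simpa using h₁)) (ext_ring (by simpa using h₂))

end Calculus

theorem countable_setOf_eq_and_deriv_ne_zero {E : Type*} [NormedAddCommGroup E]
    [NormedSpace ℝ E] (f : ℝ → E) (t : E) : {x | f x = t ∧ deriv f x ≠ 0}.Countable := by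
  set s := {x | f x = t ∧ deriv f x ≠ 0}
  have hdiscrete : DiscreteTopology s := by
    rw [discreteTopology_subtype_iff]
    rintro x ⟨hx, hdx⟩
    rw [inf_principal_eq_bot]
    filter_upwards [(differentiableAt_of_deriv_ne_zero hdx).hasDerivAt.eventually_ne hdx]
      with x' hx' hx's
    exact hx' (hx's.1.trans hx.symm)
  exact (HereditarilyLindelofSpace.isLindelof s).countable hdiscrete

section Fibers

variable {α β : Type*} [MeasurableSpace α] [MeasurableSpace β] {μ : Measure α} {ν : Measure β}
  [SFinite ν] {A : Set (α × β)}

theorem Measure.prod_null_of_countable_fibers_fst [SFinite μ] [NullSingletonClass μ]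
    (hA : MeasurableSet A) (h : ∀ b, {a | (a, b) ∈ A}.Countable) : μ.prod ν A = 0 := by
  rw [Measure.prod_apply_symm hA]
  have hfiber : ∀ b, μ ((fun a => (a, b)) ⁻¹' A) = 0 := fun b => (h b).measure_zero _
  simp [hfiber]

theorem Measure.prod_null_of_countable_fibers_snd [NullSingletonClass ν] (hA : MeasurableSet A)
    (h : ∀ a, {b | (a, b) ∈ A}.Countable) : μ.prod ν A = 0 :=
  (Measure.measure_prod_null hA).2 (Eventually.of_forall fun a => (h a).measure_zero _)

end Fibers

theorem volume_setOf_eq_and_fderiv_ne_zero {F : ℝ × ℝ → ℝ} (hF : Measurable F) (t : ℝ) :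
    volume {x | F x = t ∧ fderiv ℝ F x ≠ 0} = 0 := by
  set A : ℝ × ℝ → Set (ℝ × ℝ) := fun v => {x | F x = t ∧ fderiv ℝ F x v ≠ 0}
  have hA : ∀ v, MeasurableSet (A v) := fun v =>
    (hF (measurableSet_singleton t)).inter
      ((measurable_fderiv_apply_const ℝ F v) (measurableSet_singleton 0)).compl
  have hcover : {x | F x = t ∧ fderiv ℝ F x ≠ 0} ⊆ A (1, 0) ∪ A (0, 1) := by
    rintro x ⟨hx, hdx⟩
    by_contra hnot
    simp only [A, mem_union, mem_ofPred_eq, hx, true_and, not_or, not_not] at hnot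
    exact hdx (ContinuousLinearMap.eq_zero_of_apply_inl_inr hnot.1 hnot.2)
  rw [Measure.volume_eq_prod]
  refine measure_mono_null hcover (measure_union_null ?_ ?_)
  · refine Measure.prod_null_of_countable_fibers_fst (hA _) fun b =>
      (countable_setOf_eq_and_deriv_ne_zero (fun a => F (a, b)) t).mono ?_
    rintro a ⟨ha, hda⟩
    exact ⟨ha, by rwa [(differentiableAt_of_fderiv_apply_ne_zero hda).deriv_comp_mk_const]⟩
  · refine Measure.prod_null_of_countable_fibers_snd (hA _) fun a =>
      (countable_setOf_eq_and_deriv_ne_zero (fun b => F (a, b)) t).mono ?_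
    rintro b ⟨hb, hdb⟩
    exact ⟨hb, by rwa [(differentiableAt_of_fderiv_apply_ne_zero hdb).deriv_comp_const_mk]⟩

theorem nullSingletonClass_map_of_fderiv_ne_zero {F : ℝ × ℝ → ℝ} (hF : Measurable F)
    {μ : Measure (ℝ × ℝ)} (hμ : μ ≪ volume) {s : Set (ℝ × ℝ)} (hs : ∀ x ∈ s, fderiv ℝ F x ≠ 0)
    (hμs : ∀ᵐ x ∂μ, x ∈ s) : NullSingletonClass (μ.map F) := by
  refine ⟨fun t => ?_⟩
  rw [Measure.map_apply hF (measurableSet_singleton t), measure_eq_zero_iff_ae_notMem]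
  have hlevel := hμ (volume_setOf_eq_and_fderiv_ne_zero hF t)
  filter_upwards [hμs, measure_eq_zero_iff_ae_notMem.1 hlevel] with x hxs hx hFx
  exact hx ⟨hFx, hs x hxs⟩

theorem ProbabilityTheory.continuous_cdf (ρ : Measure ℝ) [IsProbabilityMeasure ρ]
    [NullSingletonClass ρ] : Continuous (cdf ρ) := by
  refine continuous_iff_continuousAt.2 fun t => continuousAt_iff_continuous_left_right.2
    ⟨?_, (cdf ρ).right_continuous t⟩
  have hjump : ENNReal.ofReal (cdf ρ t - Function.leftLim (cdf ρ) t) = 0 := by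
    rw [← StieltjesFunction.measure_singleton, measure_cdf, measure_singleton]
  have hleft : Function.leftLim (cdf ρ) t = cdf ρ t :=
    le_antisymm ((monotone_cdf ρ).leftLim_le le_rfl) (by simpa [sub_nonpos] using hjump)
  exact continuousWithinAt_Iio_iff_Iic.1
    ((monotone_cdf ρ).continuousWithinAt_Iio_iff_leftLim_eq.2 hleft)

theorem continuous_measure_Ioi (ρ : Measure ℝ) [IsProbabilityMeasure ρ] [NullSingletonClass ρ] :
    Continuous fun t => ρ (Ioi t) := by
  have h : (fun t => ρ (Ioi t)) = fun t => 1 - ENNReal.ofReal (cdf ρ t) := by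
    ext t
    rw [ofReal_cdf, ← prob_compl_eq_one_sub measurableSet_Iic, compl_Iic]
  rw [h]
  exact (ENNReal.continuous_sub_left ENNReal.one_ne_top).comp
    (ENNReal.continuous_ofReal.comp (continuous_cdf ρ))

theorem exists_mem_measure_Ioi_eq_measure_Ioi {ρ : Measure ℝ} {K : Set ℝ} (hK : IsCompact K)
    (hρK : ρ Kᶜ = 0) {s : ℝ} (hs : (K ∩ Iic s).Nonempty) : ∃ t ∈ K, ρ (Ioi t) = ρ (Ioi s) := by
  obtain ⟨t, ⟨htK, hts⟩, htmax⟩ := (hK.inter_right isClosed_Iic).exists_isGreatest hs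
  refine ⟨t, htK, ?_⟩
  have hgap : Ioc t s ⊆ Kᶜ := fun u hu huK => hu.1.not_ge (htmax ⟨huK, hu.2⟩)
  rw [← Ioc_union_Ioi_eq_Ioi hts, measure_union (Ioc_disjoint_Ioi le_rfl) measurableSet_Ioi,
    measure_mono_null hgap hρK, zero_add]

theorem exists_mem_measure_Ioi_eq (ρ : Measure ℝ) [IsProbabilityMeasure ρ] [NullSingletonClass ρ]
    {K : Set ℝ} (hK : IsCompact K) (hKne : K.Nonempty) (hρK : ρ Kᶜ = 0) {a : ENNReal}
    (ha : a ≤ 1) : ∃ t ∈ K, ρ (Ioi t) = a := by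
  obtain ⟨m, hmK, hm⟩ := hK.exists_isLeast hKne
  obtain ⟨M, hMK, hM⟩ := hK.exists_isGreatest hKne
  have hm1 : ρ (Ioi m) = 1 := by
    rw [← prob_compl_eq_zero_iff measurableSet_Ioi, compl_Ioi]
    refine measure_mono_null (fun u hu => ?_) (measure_union_null hρK (measure_singleton m))
    by_cases huK : u ∈ K
    · exact Or.inr (le_antisymm hu (hm huK))
    · exact Or.inl huK
  have hM0 : ρ (Ioi M) = 0 := measure_mono_null (fun u hu huK => (hM huK).not_gt hu) hρK
  obtain ⟨s, hs, hsa⟩ := intermediate_value_Icc' (hm hMK) (continuous_measure_Ioi ρ).continuousOn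
    (show a ∈ Icc (ρ (Ioi M)) (ρ (Ioi m)) by rw [hm1, hM0]; exact ⟨zero_le, ha⟩)
  obtain ⟨t, htK, ht⟩ := exists_mem_measure_Ioi_eq_measure_Ioi hK hρK ⟨m, hmK, hs.1⟩
  exact ⟨t, htK, ht.trans hsa⟩

theorem mass_splitting_exists_in_y_general
    (X : Set (ℝ × ℝ)) (hXb : Bornology.IsBounded X)
    (c : (ℝ × ℝ) → ℝ → ℝ) (hc : ContDiff ℝ 2 (Function.uncurry c))
    (cy : (ℝ × ℝ) → ℝ → ℝ) (hcy : ∀ x y, cy x y = deriv (c x) y)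
    (hgrad : ∀ x ∈ closure X, ∀ y ∈ Icc (0:ℝ) 1, fderiv ℝ (fun x' => cy x' y) x ≠ 0)
    (μ : Measure (ℝ × ℝ)) (ν : Measure ℝ)
    [IsProbabilityMeasure μ] [IsProbabilityMeasure ν]
    (hμac : μ ≪ volume)
    (hμX : μ X = 1) :
    ∀ y ∈ Ioo (0:ℝ) 1, ∃ x ∈ closure X,
      ∀ xb ∈ closure X, cy xb y = cy x y →
        μ {x' : ℝ × ℝ | cy xb y < cy x' y} = ν (Ico 0 y) := by
  intro y hy
  set F := fun x => cy x y
  have hF : Continuous F := by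
    simpa only [F, hcy] using continuous_deriv_of_contDiff_uncurry (hc.of_le one_le_two) y
  have hμXcl : ∀ᵐ x ∂μ, x ∈ closure X := by
    rw [ae_mem_iff_measure_eq isClosed_closure.nullMeasurableSet, measure_univ]
    exact le_antisymm prob_le_one (hμX ▸ measure_mono subset_closure)
  set K := F '' closure X
  have hK : IsCompact K := hXb.isCompact_closure.image hF
  have hKne : K.Nonempty :=
    (nonempty_of_measure_ne_zero (μ := μ) (by rw [hμX]; exact one_ne_zero)).closure.image F
  have : IsProbabilityMeasure (μ.map F) := Measure.isProbabilityMeasure_map hF.aemeasurable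
  have : NullSingletonClass (μ.map F) := nullSingletonClass_map_of_fderiv_ne_zero hF.measurable
    hμac (fun x hx => hgrad x hx y (Ioo_subset_Icc_self hy)) hμXcl
  have hρK : μ.map F Kᶜ = 0 := by
    rw [Measure.map_apply hF.measurable hK.isClosed.measurableSet.compl,
      measure_eq_zero_iff_ae_notMem]
    exact hμXcl.mono fun x hx hxK => hxK (mem_image_of_mem F hx)
  obtain ⟨_, ⟨x, hx, rfl⟩, ht⟩ :=
    exists_mem_measure_Ioi_eq (μ.map F) hK hKne hρK (prob_le_one (μ := ν))
  refine ⟨x, hx, fun xb _ hxb => ?_⟩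
  rw [← ht, Measure.map_apply hF.measurable measurableSet_Ioi, hxb]
  rfl

/-- Lemma 4.5: for each `y ∈ Y = (0,1)` there is `x ∈ X̄` such that `y`
splits the mass at `x̄` precisely for those `x̄ ∈ L_x(y)`, i.e.
`μ({x' : ∂c/∂y(x,y) < ∂c/∂y(x',y)}) = ν([0,y))`. -/
theorem mass_splitting_exists_in_y
    (X : Set (ℝ × ℝ)) (hXo : IsOpen X) (hXb : Bornology.IsBounded X)
    (c : (ℝ × ℝ) → ℝ → ℝ) (hc : ContDiff ℝ 2 (Function.uncurry c))
    (cy : (ℝ × ℝ) → ℝ → ℝ) (hcy : ∀ x y, cy x y = deriv (c x) y)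
    (hgrad : ∀ x ∈ closure X, ∀ y ∈ Icc (0:ℝ) 1, fderiv ℝ (fun x' => cy x' y) x ≠ 0)
    (μ : Measure (ℝ × ℝ)) (ν : Measure ℝ)
    [IsProbabilityMeasure μ] [IsProbabilityMeasure ν]
    (hμac : μ ≪ volume) (hνac : ν ≪ volume)
    (hμX : μ X = 1) (hνY : ν (Ioo (0:ℝ) 1) = 1) :
    ∀ y ∈ Ioo (0:ℝ) 1, ∃ x ∈ closure X,
      ∀ xb ∈ closure X, cy xb y = cy x y →
        μ {x' : ℝ × ℝ | cy xb y < cy x' y} = ν (Ico 0 y) :=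
  mass_splitting_exists_in_y_general X hXb c hc cy hcy hgrad μ ν hμac hμX
end

section
/- Let X = {(x₁,x₂) : −1 < x₁ < 1, −1 < x₂ < φ(x₁)} where φ: (−1,1) → (−1,1) is C^∞, φ ≡ 0 on (−1,0), and φ strictly increasing on (0,1) with φ(x₁) → 1 as x₁ → 1. Let Q(x₁,x₂) = x₂ and μ = k·Lebesgue on X normalized to mass 1. Then the density h of Q_#μ with respect to 1-dimensional Lebesgue measure satisfies h(z) = 2k for z ∈ (−1,0) and h(z) = k(1 − φ⁻¹(z)) < k for z ∈ (0,1); in particular h is discontinuous at 0. -/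
open Set MeasureTheory

/-- Example 3.11: for the domain under the graph of `φ` and `Q = x₂`,
the density `h` of `Q_#μ` (with `μ = k·Lebesgue` on `X` of total mass 1) equals `2k`
on `(−1,0)` and `k(1 − φ⁻¹(z)) < k` on `(0,1)`; in particular `h` is discontinuous
at `0`. -/
theorem quotient_density_discontinuous
    (φ : ℝ → ℝ) (hφsmooth : ContDiffOn ℝ (⊤ : ℕ∞) φ (Ioo (-1:ℝ) 1))
    (hφmaps : MapsTo φ (Ioo (-1:ℝ) 1) (Ioo (-1:ℝ) 1))
    (hφ0 : ∀ t ∈ Ioo (-1:ℝ) 0, φ t = 0)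
    (hφmono : StrictMonoOn φ (Ico (0:ℝ) 1))
    (hφlim : Filter.Tendsto φ (nhdsWithin 1 (Iio 1)) (nhds 1))
    (X : Set (ℝ × ℝ))
    (hX : X = {p : ℝ × ℝ | -1 < p.1 ∧ p.1 < 1 ∧ -1 < p.2 ∧ p.2 < φ p.1})
    (k : ℝ) (hk : 0 < k)
    (μ : Measure (ℝ × ℝ)) (hμ : μ = (ENNReal.ofReal k) • volume.restrict X)
    (hnorm : μ Set.univ = 1) :
    ∃ h : ℝ → ℝ,
      Measure.map Prod.snd μ = volume.withDensity (fun z => ENNReal.ofReal (h z)) ∧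
      (∀ z ∈ Ioo (-1:ℝ) 0, h z = 2 * k) ∧
      (∀ z ∈ Ioo (0:ℝ) 1,
        h z = k * (1 - Function.invFunOn φ (Ioo (0:ℝ) 1) z) ∧ h z < k) ∧
      ¬ ContinuousAt h 0 := by
  classical
  set inv : ℝ → ℝ := Function.invFunOn φ (Ioo (0:ℝ) 1) with hinv
  set h : ℝ → ℝ := fun z =>
    if z ∈ Ioo (-1:ℝ) 0 then 2*k else if z ∈ Ioo (0:ℝ) 1 then k * (1 - inv z) else 0 with hh
  have hcont : ContinuousOn φ (Ioo (-1:ℝ) 1) := hφsmooth.continuousOn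
  -- φ 0 = 0
  have hmem0 : (0:ℝ) ∈ Ioo (-1:ℝ) 1 := by norm_num
  have hca : ContinuousAt φ 0 :=
    hcont.continuousAt (Ioo_mem_nhds (by norm_num) (by norm_num))
  have hφzero : φ 0 = 0 := by
    have h1 : Filter.Tendsto φ (nhdsWithin 0 (Iio 0)) (nhds (φ 0)) :=
      hca.continuousWithinAt.tendsto
    have h2 : Filter.Tendsto φ (nhdsWithin 0 (Iio 0)) (nhds 0) := by
      have hev : ∀ᶠ x in nhdsWithin (0:ℝ) (Iio 0), φ x = 0 := by
        filter_upwards [self_mem_nhdsWithin,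
          eventually_nhdsWithin_of_eventually_nhds
            (eventually_gt_nhds (show (-1:ℝ) < 0 by norm_num))] with x hx1 hx2
        exact hφ0 x ⟨hx2, hx1⟩
      exact Filter.Tendsto.congr' (Filter.EventuallyEq.symm hev) tendsto_const_nhds
    exact tendsto_nhds_unique h1 h2
  have hmono : MonotoneOn φ (Ico (0:ℝ) 1) := hφmono.monotoneOn
  have hφnonneg : ∀ x ∈ Ico (0:ℝ) 1, 0 ≤ φ x := fun x hx => by
    have := hmono (left_mem_Ico.2 (by norm_num)) hx hx.1
    rwa [hφzero] at this
  -- surjectivity onto (0,1)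
  have hsurj : ∀ y ∈ Ioo (0:ℝ) 1, ∃ x ∈ Ioo (0:ℝ) 1, φ x = y := by
    intro y hy
    obtain ⟨b, hby, hb01⟩ : ∃ b, y < φ b ∧ b ∈ Ioo (0:ℝ) 1 := by
      have h1 : ∀ᶠ b in nhdsWithin (1:ℝ) (Iio 1), y < φ b :=
        hφlim.eventually (eventually_gt_nhds hy.2)
      have h2 : ∀ᶠ b in nhdsWithin (1:ℝ) (Iio 1), b ∈ Ioo (0:ℝ) 1 := by
        filter_upwards [self_mem_nhdsWithin,
          eventually_nhdsWithin_of_eventually_nhds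
            (eventually_gt_nhds (show (0:ℝ) < 1 by norm_num))] with b hb1 hb2
        exact ⟨hb2, hb1⟩
      exact (h1.and h2).exists
    have hIcc : Icc (0:ℝ) b ⊆ Ioo (-1:ℝ) 1 := fun x hx =>
      ⟨by linarith [hx.1], lt_of_le_of_lt hx.2 hb01.2⟩
    have := intermediate_value_Ioo (le_of_lt hb01.1) (hcont.mono hIcc)
    have hy' : y ∈ Ioo (φ 0) (φ b) := by rw [hφzero]; exact ⟨hy.1, hby⟩
    obtain ⟨x, hx, hxy⟩ := this hy'
    exact ⟨x, ⟨hx.1, lt_trans hx.2 hb01.2⟩, hxy⟩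
  have hinvmem : ∀ y ∈ Ioo (0:ℝ) 1, inv y ∈ Ioo (0:ℝ) 1 := fun y hy =>
    Function.invFunOn_mem (hsurj y hy)
  have hinveq : ∀ y ∈ Ioo (0:ℝ) 1, φ (inv y) = y := fun y hy =>
    Function.invFunOn_eq (hsurj y hy)
  -- fiber computations
  have hfiber_neg : ∀ y ∈ Ioo (-1:ℝ) 0, {x : ℝ | (x, y) ∈ X} = Ioo (-1:ℝ) 1 := by
    intro y hy
    rw [hX]; ext x
    simp only [mem_setOf_eq, mem_Ioo]
    constructor
    · rintro ⟨h1, h2, -, -⟩; exact ⟨h1, h2⟩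
    · rintro ⟨h1, h2⟩
      refine ⟨h1, h2, hy.1, ?_⟩
      rcases lt_or_ge x 0 with hx0 | hx0
      · rw [hφ0 x ⟨h1, hx0⟩]; exact hy.2
      · exact lt_of_lt_of_le hy.2 (hφnonneg x ⟨hx0, h2⟩)
  have hfiber_pos : ∀ y ∈ Ioo (0:ℝ) 1, {x : ℝ | (x, y) ∈ X} = Ioo (inv y) 1 := by
    intro y hy
    have hiv := hinvmem y hy
    have hie := hinveq y hy
    rw [hX]; ext x
    simp only [mem_setOf_eq, mem_Ioo]
    constructor
    · rintro ⟨h1, h2, -, h4⟩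
      refine ⟨?_, h2⟩
      by_contra hle
      push_neg at hle
      have hx0 : 0 < x := by
        rcases lt_or_ge x 0 with hx0 | hx0
        · rw [hφ0 x ⟨h1, hx0⟩] at h4; linarith [hy.1]
        · rcases eq_or_lt_of_le hx0 with rfl | hx0'
          · rw [hφzero] at h4; linarith [hy.1]
          · exact hx0'
      have := hmono ⟨le_of_lt hx0, h2⟩ ⟨le_of_lt hiv.1, hiv.2⟩ hle
      rw [hie] at this; linarith
    · rintro ⟨h1, h2⟩
      have hx0 : 0 < x := lt_trans hiv.1 h1
      refine ⟨by linarith, h2, by linarith [hy.1], ?_⟩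
      have := hφmono ⟨le_of_lt hiv.1, hiv.2⟩ ⟨le_of_lt hx0, h2⟩ h1
      rwa [hie] at this
  have hfiber_low : ∀ y : ℝ, y ≤ -1 → {x : ℝ | (x, y) ∈ X} = ∅ := by
    intro y hy
    rw [hX]; ext x
    simp only [mem_setOf_eq, mem_empty_iff_false, iff_false]
    rintro ⟨-, -, h3, -⟩; linarith
  have hfiber_high : ∀ y : ℝ, 1 ≤ y → {x : ℝ | (x, y) ∈ X} = ∅ := by
    intro y hy
    rw [hX]; ext x
    simp only [mem_setOf_eq, mem_empty_iff_false, iff_false]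
    rintro ⟨h1, h2, -, h4⟩
    have := (hφmaps ⟨h1, h2⟩).2
    linarith
  -- X is open
  have hXopen : IsOpen X := by
    have hXeq : X = ((Ioo (-1:ℝ) 1) ×ˢ (Ioi (-1:ℝ))) ∩
        ((fun p : ℝ × ℝ => p.2 - φ p.1) ⁻¹' Iio 0) := by
      rw [hX]; ext p
      simp only [mem_inter_iff, mem_prod, mem_Ioo, mem_Ioi, mem_preimage, mem_Iio,
        mem_setOf_eq, sub_neg]
      tauto
    rw [hXeq]
    refine ContinuousOn.isOpen_inter_preimage ?_ (isOpen_Ioo.prod isOpen_Ioi) isOpen_Iio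
    refine ContinuousOn.sub continuous_snd.continuousOn ?_
    exact hcont.comp continuous_fst.continuousOn (fun p hp => hp.1)
  have hXm : MeasurableSet X := hXopen.measurableSet
  -- key pointwise identity
  have key : ∀ y : ℝ, y ≠ 0 →
      ENNReal.ofReal k * volume {x : ℝ | (x, y) ∈ X} = ENNReal.ofReal (h y) := by
    intro y hy0
    rcases le_or_gt y (-1) with hc | hc
    · rw [hfiber_low y hc]
      have : h y = 0 := by
        have n1 : y ∉ Ioo (-1:ℝ) 0 := by simp only [mem_Ioo]; push_neg; intro h'; linarith
        have n2 : y ∉ Ioo (0:ℝ) 1 := by simp only [mem_Ioo]; push_neg; intro h'; linarith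
        simp only [hh]; rw [if_neg n1, if_neg n2]
      simp [this]
    rcases lt_or_ge y 0 with hc2 | hc2
    · rw [hfiber_neg y ⟨hc, hc2⟩, Real.volume_Ioo]
      have : h y = 2 * k := by simp only [hh]; rw [if_pos ⟨hc, hc2⟩]
      rw [this, ← ENNReal.ofReal_mul (le_of_lt hk)]
      norm_num
      ring_nf
      rw [ENNReal.ofReal_mul (le_of_lt hk)]; simp
    rcases lt_or_ge y 1 with hc3 | hc3
    · have hy01 : y ∈ Ioo (0:ℝ) 1 := ⟨lt_of_le_of_ne hc2 (Ne.symm hy0), hc3⟩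
      rw [hfiber_pos y hy01, Real.volume_Ioo]
      have : h y = k * (1 - inv y) := by
        have n1 : y ∉ Ioo (-1:ℝ) 0 := by simp only [mem_Ioo]; push_neg; intro h'; linarith [hy01.1]
        simp only [hh]; rw [if_neg n1, if_pos hy01]
      rw [this, ← ENNReal.ofReal_mul (le_of_lt hk)]
    · rw [hfiber_high y hc3]
      have : h y = 0 := by
        have n1 : y ∉ Ioo (-1:ℝ) 0 := by simp only [mem_Ioo]; push_neg; intro h'; linarith
        have n2 : y ∉ Ioo (0:ℝ) 1 := by simp only [mem_Ioo]; push_neg; intro h'; linarith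
        simp only [hh]; rw [if_neg n1, if_neg n2]
      simp [this]
  refine ⟨h, ?_, ?_, ?_, ?_⟩
  · -- measure equality
    refine Measure.ext fun s hs => ?_
    rw [Measure.map_apply measurable_snd hs, hμ, Measure.smul_apply, smul_eq_mul,
      Measure.restrict_apply (hs.preimage measurable_snd),
      withDensity_apply _ hs]
    have hmt : MeasurableSet (Prod.snd ⁻¹' s ∩ X) := (hs.preimage measurable_snd).inter hXm
    rw [Measure.volume_eq_prod, Measure.prod_apply_symm hmt]
    have hthis : ∀ y : ℝ, volume ((fun x => (x, y)) ⁻¹' (Prod.snd ⁻¹' s ∩ X)) =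
        s.indicator (fun y => volume {x : ℝ | (x, y) ∈ X}) y := by
      intro y
      by_cases hy : y ∈ s
      · rw [indicator_of_mem hy]
        congr 1
        ext x; simp [hy]
      · rw [indicator_of_notMem hy]
        have : ((fun x => (x, y)) ⁻¹' (Prod.snd ⁻¹' s ∩ X)) = ∅ := by ext x; simp [hy]
        rw [this]; simp
    rw [lintegral_congr hthis, lintegral_indicator hs,
      ← lintegral_const_mul' _ _ ENNReal.ofReal_ne_top]
    refine lintegral_congr_ae ?_
    have hae : ∀ᵐ y : ℝ, y ≠ 0 := by
      rw [Filter.Eventually, mem_ae_iff]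
      have : {y : ℝ | y ≠ 0}ᶜ = {0} := by ext y; simp
      rw [this]; exact measure_singleton 0
    exact Filter.EventuallyEq.restrict (hae.mono fun y hy => key y hy)
  · intro z hz
    simp only [hh]; rw [if_pos hz]
  · intro z hz
    have hne : z ∉ Ioo (-1:ℝ) 0 := by simp only [mem_Ioo]; push_neg; intro h'; linarith [hz.1]
    -- (uses mem_Ioo form)
    have hz' : h z = k * (1 - inv z) := by simp only [hh]; rw [if_neg hne, if_pos hz]
    refine ⟨hz', ?_⟩
    rw [hz']
    have := hinvmem z hz
    nlinarith [this.1]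
  · -- discontinuity
    intro hcont0
    have h0 : h 0 = 0 := by
      have n1 : (0:ℝ) ∉ Ioo (-1:ℝ) 0 := by simp
      have n2 : (0:ℝ) ∉ Ioo (0:ℝ) 1 := by simp
      simp only [hh]; rw [if_neg n1, if_neg n2]
    have h1 : Filter.Tendsto h (nhdsWithin 0 (Iio 0)) (nhds 0) := by
      have := hcont0.continuousWithinAt (s := Iio 0)
      rwa [ContinuousWithinAt, h0] at this
    have h2 : Filter.Tendsto h (nhdsWithin (0:ℝ) (Iio 0)) (nhds (2 * k)) := by
      have hev : ∀ᶠ y in nhdsWithin (0:ℝ) (Iio 0), h y = 2 * k := by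
        filter_upwards [self_mem_nhdsWithin,
          eventually_nhdsWithin_of_eventually_nhds
            (eventually_gt_nhds (show (-1:ℝ) < 0 by norm_num))] with y hy1 hy2
        simp only [hh]; rw [if_pos ⟨hy2, hy1⟩]
      exact Filter.Tendsto.congr' (Filter.EventuallyEq.symm hev) tendsto_const_nhds
    have := tendsto_nhds_unique h1 h2
    linarith
end
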